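/- Define f : [0,1] → 2^[0,1] by f(x) = {0, x} for 0 ≤ x ≤ 1/4, f(x) = {0} for 1/4 < x < 1, and f(1) = [0,1]. Then f is upper semicontinuous, surjective, has connected graph, but does not have the Weak Intermediate Value Property: taking x₁ = 1/4, y₁ = 1/4, x₂ = 1/2, the only y₂ ∈ f(x₂) is 0, yet 1/8 ∉ f(x) for all x ∈ [1/4, 1/2]. -/

import Mathlib

/-!
The graph of `fIngram` is the diagonal segment over `[0, 1/4]`, the bottom edge `[0,1] × {0}` and
the right edge `{1} × [0,1]`: three compact connected sets chained through `(0,0)` and `(1,0)`.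
A compact graph forces upper semicontinuity. The Weak Intermediate Value Property fails from
`(1/4, 1/4)` towards `x₂ = 1/2`, where `0` is the only value, because `1/8` is not attained over
`[1/4, 1/2]`.
-/

open Set

/-- Graph of a set-valued function on [0,1]. -/
def SVGraph (f : ℝ → Set ℝ) : Set (ℝ × ℝ) :=
  {p | p.1 ∈ Icc (0:ℝ) 1 ∧ p.2 ∈ f p.1}

/-- f has nonempty compact values contained in [0,1]. -/
def SV (f : ℝ → Set ℝ) : Prop :=
  ∀ x ∈ Icc (0:ℝ) 1, (f x).Nonempty ∧ IsCompact (f x) ∧ f x ⊆ Icc (0:ℝ) 1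

/-- Upper semicontinuity on [0,1]. -/
def USC (f : ℝ → Set ℝ) : Prop :=
  ∀ x ∈ Icc (0:ℝ) 1, ∀ U : Set ℝ, IsOpen U → f x ⊆ U →
    ∃ V : Set ℝ, IsOpen V ∧ x ∈ V ∧ ∀ v ∈ V ∩ Icc (0:ℝ) 1, f v ⊆ U

/-- Weak Intermediate Value Property. -/
def WIVP (f : ℝ → Set ℝ) : Prop :=
  ∀ x₁ ∈ Icc (0:ℝ) 1, ∀ x₂ ∈ Icc (0:ℝ) 1, x₁ ≠ x₂ → ∀ y₁ ∈ f x₁,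
    ∃ y₂ ∈ f x₂, ∀ y ∈ uIcc y₁ y₂, ∃ x ∈ uIcc x₁ x₂, y ∈ f x

/-- Intermediate Value Property. -/
def IVP (f : ℝ → Set ℝ) : Prop :=
  ∀ x₁ ∈ Icc (0:ℝ) 1, ∀ x₂ ∈ Icc (0:ℝ) 1, x₁ ≠ x₂ → ∀ y₁ ∈ f x₁, ∀ y₂ ∈ f x₂, y₁ ≠ y₂ →
    ∀ y ∈ Ioo (min y₁ y₂) (max y₁ y₂), ∃ x ∈ Ioo (min x₁ x₂) (max x₁ x₂), y ∈ f x

noncomputable def fIngram (x : ℝ) : Set ℝ :=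
  if x ≤ 1/4 then {0, x} else if x < 1 then {0} else Icc 0 1

theorem usc_of_isCompact_SVGraph {f : ℝ → Set ℝ} (hf : IsCompact (SVGraph f)) : USC f := by
  intro x hx U hU hxU
  -- points of the graph lying outside `U` project onto a compact set that misses `x`
  set K := Prod.fst '' (SVGraph f ∩ univ ×ˢ Uᶜ)
  have hK : IsClosed K :=
    ((hf.inter_right (isClosed_univ.prod hU.isClosed_compl)).image continuous_fst).isClosed
  refine ⟨Kᶜ, hK.isOpen_compl, ?_, ?_⟩
  · rintro ⟨⟨x', y⟩, ⟨⟨-, hy⟩, -, hyU⟩, rfl⟩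
    exact hyU (hxU hy)
  · rintro v ⟨hvK, hv⟩ y hy
    by_contra hyU
    exact hvK ⟨(v, y), ⟨⟨hv, hy⟩, trivial, hyU⟩, rfl⟩

theorem mem_fIngram_iff {x y : ℝ} (hx : x ∈ Icc (0:ℝ) 1) :
    y ∈ fIngram x ↔ y = 0 ∨ (x ≤ 1/4 ∧ y = x) ∨ (x = 1 ∧ y ∈ Icc (0:ℝ) 1) := by
  obtain ⟨hx0, hx1⟩ := hx
  unfold fIngram
  split_ifs <;> simp only [mem_insert_iff, mem_singleton_iff, mem_Icc] <;> grind

theorem SVGraph_fIngram : SVGraph fIngram =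
    (fun t : ℝ => (t, t)) '' Icc 0 (1/4) ∪ Icc (0:ℝ) 1 ×ˢ {0} ∪ {1} ×ˢ Icc (0:ℝ) 1 := by
  ext ⟨x, y⟩
  simp only [SVGraph, mem_ofPred_eq, mem_union, mem_image, mem_prod, mem_singleton_iff, Prod.mk.injEq]
  constructor
  · rintro ⟨hx, hy⟩
    rw [mem_fIngram_iff hx] at hy
    grind
  · intro h
    have hx : x ∈ Icc (0:ℝ) 1 := by grind
    refine ⟨hx, (mem_fIngram_iff hx).2 ?_⟩
    grind

theorem isCompact_SVGraph_fIngram : IsCompact (SVGraph fIngram) := by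
  rw [SVGraph_fIngram]
  exact (((isCompact_Icc.image (by fun_prop)).union (isCompact_Icc.prod isCompact_singleton)).union
    (isCompact_singleton.prod isCompact_Icc))

theorem isConnected_SVGraph_fIngram : IsConnected (SVGraph fIngram) := by
  rw [SVGraph_fIngram]
  have hdiag : IsConnected ((fun t : ℝ => (t, t)) '' Icc 0 (1/4)) :=
    (isConnected_Icc (by norm_num)).image _ (by fun_prop)
  have hbottom : IsConnected (Icc (0:ℝ) 1 ×ˢ ({0} : Set ℝ)) :=
    (isConnected_Icc zero_le_one).prod isConnected_singleton
  have hright : IsConnected (({1} : Set ℝ) ×ˢ Icc (0:ℝ) 1) :=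
    isConnected_singleton.prod (isConnected_Icc zero_le_one)
  refine (hdiag.union ?_ hbottom).union ?_ hright
  · exact ⟨(0, 0), ⟨0, by norm_num⟩, by norm_num⟩
  · exact ⟨(1, 0), Or.inr (by norm_num), by norm_num⟩

theorem one_eighth_notMem_fIngram : ∀ x ∈ Icc (1/4 : ℝ) (1/2), (1/8 : ℝ) ∉ fIngram x := by
  intro x hx
  rw [mem_fIngram_iff ⟨by linarith [hx.1], by linarith [hx.2]⟩]
  norm_num at hx ⊢
  grind

theorem fIngram_one_half : fIngram (1/2) = {0} := by
  norm_num [fIngram]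

theorem not_WIVP_fIngram : ¬ WIVP fIngram := by
  intro hW
  have hquarter : (1/4 : ℝ) ∈ fIngram (1/4) := by norm_num [fIngram]
  obtain ⟨y₂, hy₂, hbetween⟩ := hW (1/4) (by norm_num) (1/2) (by norm_num) (by norm_num) _ hquarter
  rw [fIngram_one_half, mem_singleton_iff] at hy₂
  subst hy₂
  obtain ⟨x, hx, hmem⟩ := hbetween (1/8) (by rw [uIcc_of_ge (by norm_num)]; norm_num)
  rw [uIcc_of_le (by norm_num)] at hx
  exact one_eighth_notMem_fIngram x hx hmem

theorem stmt12 :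
    USC fIngram ∧
    (∀ y ∈ Icc (0:ℝ) 1, ∃ x ∈ Icc (0:ℝ) 1, y ∈ fIngram x) ∧
    IsConnected (SVGraph fIngram) ∧
    ¬ WIVP fIngram ∧
    fIngram (1/2) = {0} ∧
    (∀ x ∈ Icc (1/4 : ℝ) (1/2), (1/8 : ℝ) ∉ fIngram x) :=
  ⟨usc_of_isCompact_SVGraph isCompact_SVGraph_fIngram,
    fun y hy => ⟨1, by norm_num, by norm_num [fIngram, hy.1, hy.2]⟩,
    isConnected_SVGraph_fIngram, not_WIVP_fIngram, fIngram_one_half, one_eighth_notMem_fIngram⟩
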